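/- arXiv:2001.09979 — 2 statements merged into one kernel-verified Lean document; each statement's English description precedes it below -/
import Mathlib

section
/- With the explicit contracting homotopy σ of the Bar complex of ℕ defined by σ_{-1}(1)=[0], σ_0([n]) = Σ_{k=1}^{n}[k−1,k], and σ_n = s_{x_0}∘(Id − σ_{n−1}∘∂), one has, modulo degenerate simplices: σ_n([x_0,…,x_n]) = (−1)^n Σ_{k=x_{n−1}+1}^{x_n} [x_0,…,x_{n−1},k−1,k] when x_n > x_{n−1}, and σ_n([x_0,…,x_n]) = (−1)^{n−1} Σ_{k=x_n+1}^{x_{n−1}} [x_0,…,x_{n−1},k−1,k] when x_n < x_{n−1}. -/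
/-- The differential of the Bar chain complex of ℕ: alternating sum of the face maps. -/
noncomputable def barD {n : ℕ} (c : (Fin (n + 2) → ℕ) →₀ ℤ) : (Fin (n + 1) → ℕ) →₀ ℤ :=
  c.sum fun f k => ∑ i : Fin (n + 2), Finsupp.single (f ∘ i.succAbove) ((-1) ^ (i : ℕ) * k)

/-- The operator prepending a vertex: [x_0,…,x_n] ↦ [x,x_0,…,x_n], extended linearly. -/
noncomputable def prependChain (x : ℕ) {n : ℕ} (c : (Fin (n + 1) → ℕ) →₀ ℤ) :
    (Fin (n + 2) → ℕ) →₀ ℤ :=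
  c.sum fun f k => Finsupp.single (Fin.cons x f) k

/-- The explicit contracting homotopy of the Bar complex of ℕ:
σ_0([n]) = Σ_{k=1}^{n} [k−1,k] and σ_n = s_{x_0} ∘ (Id − σ_{n−1} ∘ ∂). -/
noncomputable def sigmaFun : (n : ℕ) → (Fin (n + 1) → ℕ) → ((Fin (n + 2) → ℕ) →₀ ℤ)
  | 0 => fun f => ∑ k ∈ Finset.range (f 0),
      Finsupp.single (fun j : Fin 2 => if j = 0 then k else k + 1) (1 : ℤ)
  | (n + 1) => fun f =>
      prependChain (f 0)
        (Finsupp.single f 1 - (barD (Finsupp.single f 1)).sum fun g z => z • sigmaFun n g)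

/-- A Bar simplex is degenerate if two consecutive entries coincide. -/
def IsDegen {n : ℕ} (g : Fin (n + 1) → ℕ) : Prop :=
  ∃ i : Fin n, g i.castSucc = g i.succ

/-- The simplex [x_0,…,x_n,a,b] obtained from [x_0,…,x_{n+1}] by replacing the last
vertex by the pair (a,b). -/
def extSimp {n : ℕ} (f : Fin (n + 2) → ℕ) (a b : ℕ) : Fin (n + 3) → ℕ :=
  fun j => if h : (j : ℕ) < n + 1 then f ⟨(j : ℕ), by omega⟩
    else if (j : ℕ) = n + 1 then a else b


/-! Let `f = [x₀,…]` and let `g` be a simplex with `g 0 = x₀ ≠ g 1` (for `g 0 ≠ x₀` both sides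
vanish). Evaluated at `g`, `σ_{n+1}(f) = s_{x₀}(f − Σ_i (−1)^i σ_n(d_i f))` sees only the term
`i = 0`: the simplex `f` and, for `n ≥ 1` and `i ≠ 0`, the chain `σ_n(d_i f)` are supported on
simplices starting with `x₀`, which `Fin.tail g` does not. Hence
`σ_{n+2}(f)(g) = −σ_{n+1}(tail f)(tail g)`, and the formula reduces to `σ_1`, which is computed
from `σ_0` directly. -/

lemma prependChain_apply (x : ℕ) {n : ℕ} (c : (Fin (n + 1) → ℕ) →₀ ℤ) (g : Fin (n + 2) → ℕ) :
    prependChain x c g = if g 0 = x then c (Fin.tail g) else 0 := by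
  change Finsupp.mapDomain (Fin.cons x) c g = _
  split_ifs with h0
  · conv_lhs => rw [← Fin.cons_self_tail g, h0]
    exact Finsupp.mapDomain_apply (Fin.cons_right_injective (α := fun _ => ℕ) x) c _
  · exact Finsupp.mapDomain_of_notMem_range _ _ (by rintro ⟨t, rfl⟩; exact h0 rfl)

lemma sigmaFun_succ (n : ℕ) (f : Fin (n + 2) → ℕ) :
    sigmaFun (n + 1) f = prependChain (f 0)
      (Finsupp.single f 1 -
        ∑ i : Fin (n + 2), (-1 : ℤ) ^ (i : ℕ) • sigmaFun n (f ∘ i.succAbove)) := by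
  have hbarD : barD (Finsupp.single f (1 : ℤ)) =
      ∑ i : Fin (n + 2), Finsupp.single (f ∘ i.succAbove) ((-1 : ℤ) ^ (i : ℕ)) := by
    rw [barD, Finsupp.sum_single_index] <;> simp
  simp only [sigmaFun]
  rw [hbarD, ← Finsupp.linearCombination_apply, map_sum]
  simp only [Finsupp.linearCombination_single]

lemma sigmaFun_succ_apply_of_ne {n : ℕ} (f : Fin (n + 2) → ℕ) {g : Fin (n + 3) → ℕ}
    (h0 : g 0 ≠ f 0) : sigmaFun (n + 1) f g = 0 := by
  rw [sigmaFun_succ, prependChain_apply, if_neg h0]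

lemma sigmaFun_succ_apply_of_eq {n : ℕ} (f : Fin (n + 2) → ℕ) {g : Fin (n + 3) → ℕ}
    (h0 : g 0 = f 0) (h01 : g 0 ≠ g 1) :
    sigmaFun (n + 1) f g =
      -∑ i : Fin (n + 2), (-1 : ℤ) ^ (i : ℕ) * sigmaFun n (f ∘ i.succAbove) (Fin.tail g) := by
  have hf : Finsupp.single f (1 : ℤ) (Fin.tail g) = 0 :=
    Finsupp.single_eq_of_ne' fun he => h01 (h0.trans (congrFun he 0))
  rw [sigmaFun_succ, prependChain_apply, if_pos h0, Finsupp.sub_apply, hf, zero_sub,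
    Finset.sum_apply']
  rfl

lemma sigmaFun_succ_succ_apply_of_eq {n : ℕ} (f : Fin (n + 3) → ℕ) {g : Fin (n + 4) → ℕ}
    (h0 : g 0 = f 0) (h01 : g 0 ≠ g 1) :
    sigmaFun (n + 2) f g = -sigmaFun (n + 1) (Fin.tail f) (Fin.tail g) := by
  have hface : ∀ i : Fin (n + 3), i ≠ 0 →
      (-1 : ℤ) ^ (i : ℕ) * sigmaFun (n + 1) (f ∘ i.succAbove) (Fin.tail g) = 0 := by
    intro i hi
    have hstart : Fin.tail g 0 ≠ (f ∘ i.succAbove) 0 := by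
      rw [Function.comp_apply, Fin.succAbove_ne_zero_zero hi, ← h0]
      exact fun he => h01 he.symm
    rw [sigmaFun_succ_apply_of_ne _ hstart, mul_zero]
  rw [sigmaFun_succ_apply_of_eq f h0 h01, Fintype.sum_eq_single 0 hface]
  simp only [Fin.val_zero, pow_zero, one_mul]
  rfl

lemma sigmaFun_zero_apply (h : Fin 1 → ℕ) (t : Fin 2 → ℕ) :
    sigmaFun 0 h t = if t 1 = t 0 + 1 ∧ t 0 < h 0 then 1 else 0 := by
  have hsimplex : ∀ k : ℕ, (fun j : Fin 2 => if j = 0 then k else k + 1) = t ↔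
      k = t 0 ∧ t 1 = t 0 + 1 := by
    intro k
    refine ⟨fun he => ?_, fun ⟨hk, h1⟩ => funext fun j => ?_⟩
    · have := congrFun he 0; have := congrFun he 1; simp_all
    · fin_cases j <;> simp [hk, h1]
  rw [sigmaFun, Finset.sum_apply']
  simp only [Finsupp.single_apply, hsimplex, ite_and, Finset.sum_ite_eq', Finset.mem_range]
  split_ifs <;> simp_all

noncomputable def ladderChain {n : ℕ} (f : Fin (n + 2) → ℕ) (a b : ℕ) :
    (Fin (n + 3) → ℕ) →₀ ℤ :=
  ∑ k ∈ Finset.Icc (a + 1) b, Finsupp.single (extSimp f (k - 1) k) 1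

-- Both cases of the formula at once: under either strict inequality one ladder is empty.
noncomputable def sigmaClosedForm (n : ℕ) (f : Fin (n + 2) → ℕ) : (Fin (n + 3) → ℕ) →₀ ℤ :=
  (-1 : ℤ) ^ (n + 1) • (ladderChain f (f (Fin.last n).castSucc) (f (Fin.last (n + 1))) -
    ladderChain f (f (Fin.last (n + 1))) (f (Fin.last n).castSucc))

lemma extSimp_eq_cons {n : ℕ} (f : Fin (n + 3) → ℕ) (a b : ℕ) :
    extSimp f a b = Fin.cons (f 0) (extSimp (Fin.tail f) a b) := by
  funext j
  refine Fin.cases rfl (fun i => ?_) j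
  simp only [extSimp, Fin.cons_succ, Fin.val_succ, Fin.tail, add_lt_add_iff_right,
    add_left_inj]
  split_ifs <;> rfl

lemma ladderChain_of_le {n : ℕ} (f : Fin (n + 2) → ℕ) {a b : ℕ} (hba : b ≤ a) :
    ladderChain f a b = 0 := by
  rw [ladderChain, Finset.Icc_eq_empty (by omega), Finset.sum_empty]

lemma ladderChain_apply_of_ne {n : ℕ} (f : Fin (n + 2) → ℕ) (a b : ℕ) {g : Fin (n + 3) → ℕ}
    (h0 : g 0 ≠ f 0) : ladderChain f a b g = 0 := by
  rw [ladderChain, Finset.sum_apply']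
  exact Finset.sum_eq_zero fun k _ => Finsupp.single_eq_of_ne' fun he => h0 (he ▸ rfl)

lemma ladderChain_apply_of_eq {n : ℕ} (f : Fin (n + 3) → ℕ) (a b : ℕ) {g : Fin (n + 4) → ℕ}
    (h0 : g 0 = f 0) : ladderChain f a b g = ladderChain (Fin.tail f) a b (Fin.tail g) := by
  have hcons : ∀ k : ℕ,
      extSimp f (k - 1) k = g ↔ extSimp (Fin.tail f) (k - 1) k = Fin.tail g := by
    intro k
    rw [extSimp_eq_cons, ← Fin.cons_self_tail g, h0, Fin.cons_inj, Fin.tail_cons]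
    simp
  simp only [ladderChain, Finset.sum_apply', Finsupp.single_apply, hcons]

lemma ladderChain_apply_two (f : Fin 2 → ℕ) (a b : ℕ) {g : Fin 3 → ℕ} (h0 : g 0 = f 0) :
    ladderChain f a b g = if g 2 = g 1 + 1 ∧ a ≤ g 1 ∧ g 1 < b then 1 else 0 := by
  have hext : ∀ k : ℕ, extSimp f (k - 1) k = g ↔ k = g 2 ∧ g 2 - 1 = g 1 := by
    intro k
    refine ⟨fun he => ?_, fun ⟨hk, h1⟩ => funext fun j => ?_⟩
    · have := congrFun he 1; have := congrFun he 2; simp_all [extSimp]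
    · fin_cases j <;> simp [extSimp, h0, hk, h1]
  rw [ladderChain, Finset.sum_apply']
  simp only [Finsupp.single_apply, hext, ite_and, Finset.sum_ite_eq', Finset.mem_Icc]
  split_ifs <;> omega

lemma sigmaClosedForm_apply_of_ne {n : ℕ} (f : Fin (n + 2) → ℕ) {g : Fin (n + 3) → ℕ}
    (h0 : g 0 ≠ f 0) : sigmaClosedForm n f g = 0 := by
  simp [sigmaClosedForm, ladderChain_apply_of_ne _ _ _ h0]

lemma sigmaClosedForm_apply_of_eq {n : ℕ} (f : Fin (n + 3) → ℕ) {g : Fin (n + 4) → ℕ}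
    (h0 : g 0 = f 0) :
    sigmaClosedForm (n + 1) f g = -sigmaClosedForm n (Fin.tail f) (Fin.tail g) := by
  have hn : Fin.tail f (Fin.last n).castSucc = f (Fin.last (n + 1)).castSucc := rfl
  have hlast : Fin.tail f (Fin.last (n + 1)) = f (Fin.last (n + 2)) := rfl
  simp only [sigmaClosedForm, Finsupp.smul_apply, Finsupp.sub_apply,
    ladderChain_apply_of_eq f _ _ h0, smul_eq_mul, hn, hlast]
  ring

lemma sigmaFun_one_apply {f : Fin 2 → ℕ} {g : Fin 3 → ℕ} (hg : ¬ IsDegen g) :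
    sigmaFun 1 f g = sigmaClosedForm 0 f g := by
  by_cases h0 : g 0 = f 0
  · have h01 : g 0 ≠ g 1 := fun he => hg ⟨0, he⟩
    have hx₀ : f (Fin.last 0).castSucc = f 0 := rfl
    have hx₁ : f (Fin.last (0 + 1)) = f 1 := rfl
    rw [sigmaFun_succ_apply_of_eq f h0 h01, Fin.sum_univ_two, sigmaClosedForm]
    simp only [sigmaFun_zero_apply, Function.comp_apply, Fin.succAbove_zero,
      Fin.succAbove_ne_zero_zero one_ne_zero, Fin.tail, Fin.succ_zero_eq_one, Fin.succ_one_eq_two,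
      Finsupp.smul_apply, Finsupp.sub_apply, ladderChain_apply_two f _ _ h0, hx₀, hx₁,
      Fin.val_zero, Fin.val_one, pow_zero, pow_one, zero_add, smul_eq_mul]
    split_ifs <;> omega
  · rw [sigmaFun_succ_apply_of_ne f h0, sigmaClosedForm_apply_of_ne f h0]

theorem sigmaFun_succ_apply_of_not_isDegen (n : ℕ) (f : Fin (n + 2) → ℕ) {g : Fin (n + 3) → ℕ}
    (hg : ¬ IsDegen g) : sigmaFun (n + 1) f g = sigmaClosedForm n f g := by
  induction n with
  | zero => exact sigmaFun_one_apply hg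
  | succ n ih =>
    by_cases h0 : g 0 = f 0
    · have htail : ¬ IsDegen (Fin.tail g) := fun ⟨i, hi⟩ => hg ⟨i.succ, hi⟩
      rw [sigmaFun_succ_succ_apply_of_eq f h0 (fun he => hg ⟨0, he⟩), ih _ htail,
        sigmaClosedForm_apply_of_eq f h0]
    · rw [sigmaFun_succ_apply_of_ne f h0, sigmaClosedForm_apply_of_ne f h0]

/-- Modulo degenerate simplices (i.e. after evaluating coefficients at any
nondegenerate simplex g), σ_{n+1}([x_0,…,x_{n+1}]) equals
(−1)^{n+1} Σ_{k=x_n+1}^{x_{n+1}} [x_0,…,x_n,k−1,k] when x_{n+1} > x_n, and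
(−1)^n Σ_{k=x_{n+1}+1}^{x_n} [x_0,…,x_n,k−1,k] when x_{n+1} < x_n. -/
theorem sigmaFun_explicit_formula (n : ℕ) (f : Fin (n + 2) → ℕ) :
    ((f ⟨n, by omega⟩ < f (Fin.last (n + 1))) →
      ∀ g : Fin (n + 3) → ℕ, ¬ IsDegen g →
        sigmaFun (n + 1) f g =
          (-1 : ℤ) ^ (n + 1) *
            (∑ k ∈ Finset.Icc (f ⟨n, by omega⟩ + 1) (f (Fin.last (n + 1))),
              Finsupp.single (extSimp f (k - 1) k) (1 : ℤ)) g) ∧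
    ((f (Fin.last (n + 1)) < f ⟨n, by omega⟩) →
      ∀ g : Fin (n + 3) → ℕ, ¬ IsDegen g →
        sigmaFun (n + 1) f g =
          (-1 : ℤ) ^ n *
            (∑ k ∈ Finset.Icc (f (Fin.last (n + 1)) + 1) (f ⟨n, by omega⟩),
              Finsupp.single (extSimp f (k - 1) k) (1 : ℤ)) g) := by
  refine ⟨fun hlt g hg => ?_, fun hlt g hg => ?_⟩
  all_goals
    rw [sigmaFun_succ_apply_of_not_isDegen n f hg, sigmaClosedForm, Finsupp.smul_apply,
      Finsupp.sub_apply, smul_eq_mul]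
  · rw [ladderChain_of_le f (b := f (Fin.last n).castSucc) hlt.le,
      Finsupp.coe_zero, Pi.zero_apply, sub_zero]
    rfl
  · rw [ladderChain_of_le f (a := f (Fin.last n).castSucc) hlt.le,
      Finsupp.coe_zero, Pi.zero_apply, zero_sub, pow_succ]
    change _ = _ * ladderChain f (f (Fin.last (n + 1))) (f (Fin.last n).castSucc) g
    ring
end

section
/- Let H be a Hilbert space and F ∈ L(H) a bounded operator. Then the operator 1 + (1/4)(F − F*)(F* − F) is a positive invertible operator; denoting its inverse by T, the operator F̃ = ((1/4)(FF* − F*F) + (1/2)(F + F*)) · T satisfies: if F² = 1 then F̃² = 1 and F̃* = F̃. -/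
/-!
With `S = 1 + ¼(F - F*)(F* - F) = 1 + x x*` for `x = ½(F - F*)`, `S` is strictly positive in the
C⋆-algebra `L(H)`, hence positive and invertible. Writing `N = ¼(FF* - F*F) + ½(F + F*)`, both `N`
and `S` are selfadjoint, and when `F² = 1` (so also `F*² = 1`) a direct expansion gives
`N S = S N` and `N² = S²`. Then `T = S⁻¹` commutes with `N`, so `(N T)² = N² T² = S² S⁻² = 1` and
`(N T)* = T N = N T`.
-/

open ContinuousLinearMap

section Monoid

variable {M : Type*} [Monoid M] {n s t : M}

theorem mul_inverse_mul_self_eq_one (hst : s * t = 1) (hts : t * s = 1) (hns : Commute n s)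
    (hnn : n * n = s * s) : n * t * (n * t) = 1 := by
  have hnt : Commute n t := hns.units_inv_right (u := ⟨s, t, hst, hts⟩)
  calc n * t * (n * t) = n * n * (t * t) := by rw [hnt.mul_mul_mul_comm]
    _ = s * (s * t) * t := by rw [hnn]; simp only [mul_assoc]
    _ = 1 := by rw [hst, mul_one, hst]

theorem isSelfAdjoint_mul_inverse [StarMul M] (hst : s * t = 1) (hts : t * s = 1)
    (hn : IsSelfAdjoint n) (hs : IsSelfAdjoint s) (hns : Commute n s) :
    IsSelfAdjoint (n * t) := by
  have ht : IsSelfAdjoint t :=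
    left_inv_eq_right_inv (by rw [← hs.star_eq, ← star_mul, hst, star_one]) hst
  exact (IsSelfAdjoint.commute_iff hn ht).1 (hns.units_inv_right (u := ⟨s, t, hst, hts⟩))

end Monoid

section StarAlgebra

variable {R : Type*} [Ring R] [StarRing R] [Algebra ℂ R]

noncomputable def tildeDenom (F : R) : R := 1 + (1 / 4 : ℂ) • ((F - star F) * (star F - F))

noncomputable def tildeNum (F : R) : R :=
  (1 / 4 : ℂ) • (F * star F - star F * F) + (1 / 2 : ℂ) • (F + star F)

section Involution

variable {F : R}

theorem commute_tildeNum_tildeDenom (hF : F * F = 1) : Commute (tildeNum F) (tildeDenom F) := by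
  have hF' : star F * star F = 1 := by rw [← star_mul, hF, star_one]
  have hFx (x : R) : F * (F * x) = x := by rw [← mul_assoc, hF, one_mul]
  have hFx' (x : R) : star F * (star F * x) = x := by rw [← mul_assoc, hF', one_mul]
  simp only [Commute, SemiconjBy, tildeNum, tildeDenom, mul_add, add_mul, sub_mul, mul_sub,
    smul_mul_assoc, mul_smul_comm, smul_smul, mul_assoc, mul_one, one_mul, hF, hF', hFx, hFx',
    smul_sub, smul_add]
  module

theorem tildeNum_mul_self (hF : F * F = 1) :
    tildeNum F * tildeNum F = tildeDenom F * tildeDenom F := by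
  have hF' : star F * star F = 1 := by rw [← star_mul, hF, star_one]
  have hFx (x : R) : F * (F * x) = x := by rw [← mul_assoc, hF, one_mul]
  have hFx' (x : R) : star F * (star F * x) = x := by rw [← mul_assoc, hF', one_mul]
  simp only [tildeNum, tildeDenom, mul_add, add_mul, sub_mul, mul_sub,
    smul_mul_assoc, mul_smul_comm, smul_smul, mul_assoc, mul_one, one_mul, hF, hF', hFx, hFx',
    smul_sub, smul_add]
  module

end Involution

variable [StarModule ℂ R]

theorem tildeDenom_eq_one_add_mul_star (F : R) :
    tildeDenom F = 1 + ((1 / 2 : ℂ) • (F - star F)) * star ((1 / 2 : ℂ) • (F - star F)) := by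
  simp only [tildeDenom, star_smul, star_sub, star_star, smul_mul_smul_comm, Complex.star_def,
    map_div₀, map_one, Complex.conj_ofNat]
  norm_num

theorem isSelfAdjoint_tildeDenom (F : R) : IsSelfAdjoint (tildeDenom F) := by
  rw [tildeDenom_eq_one_add_mul_star]
  exact (IsSelfAdjoint.one R).add (.mul_star_self _)

theorem isSelfAdjoint_tildeNum (F : R) : IsSelfAdjoint (tildeNum F) := by
  simp only [IsSelfAdjoint, tildeNum, star_add, star_smul, star_sub, star_mul, star_star,
    Complex.star_def, map_div₀, map_one, Complex.conj_ofNat, add_comm (star F)]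

end StarAlgebra

theorem isStrictlyPositive_tildeDenom {A : Type*} [CStarAlgebra A] [PartialOrder A]
    [StarOrderedRing A] (F : A) :
    IsStrictlyPositive (tildeDenom F) := by
  rw [tildeDenom_eq_one_add_mul_star]
  exact isStrictlyPositive_one.add_nonneg (mul_star_self_nonneg _)

/-- For a bounded operator F on a Hilbert space, 1 + ¼(F−F*)(F*−F) is a
positive invertible operator, and if T denotes its inverse and
F̃ = (¼(FF*−F*F) + ½(F+F*))T, then F² = 1 implies F̃² = 1 and F̃* = F̃. -/
theorem tilde_operator_selfadjoint_involution
    {H : Type*} [NormedAddCommGroup H] [InnerProductSpace ℂ H] [CompleteSpace H]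
    (F : H →L[ℂ] H) :
    ((1 : H →L[ℂ] H) + (1 / 4 : ℂ) • ((F - adjoint F) * (adjoint F - F))).IsPositive ∧
    IsUnit ((1 : H →L[ℂ] H) + (1 / 4 : ℂ) • ((F - adjoint F) * (adjoint F - F))) ∧
    ∀ T : H →L[ℂ] H,
      ((1 + (1 / 4 : ℂ) • ((F - adjoint F) * (adjoint F - F))) * T = 1 ∧
        T * (1 + (1 / 4 : ℂ) • ((F - adjoint F) * (adjoint F - F))) = 1) →
      F * F = 1 →
      ((((1 / 4 : ℂ) • (F * adjoint F - adjoint F * F) + (1 / 2 : ℂ) • (F + adjoint F)) * T) *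
          (((1 / 4 : ℂ) • (F * adjoint F - adjoint F * F) + (1 / 2 : ℂ) • (F + adjoint F)) * T) = 1 ∧
        adjoint (((1 / 4 : ℂ) • (F * adjoint F - adjoint F * F) + (1 / 2 : ℂ) • (F + adjoint F)) * T) =
          ((1 / 4 : ℂ) • (F * adjoint F - adjoint F * F) + (1 / 2 : ℂ) • (F + adjoint F)) * T) := by
  simp only [← star_eq_adjoint]
  have hS := isStrictlyPositive_tildeDenom F
  refine ⟨(nonneg_iff_isPositive _).1 hS.nonneg, hS.isUnit, fun T ⟨hST, hTS⟩ hF ↦ ⟨?_, ?_⟩⟩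
  · exact mul_inverse_mul_self_eq_one hST hTS (commute_tildeNum_tildeDenom hF)
      (tildeNum_mul_self hF)
  · exact (isSelfAdjoint_mul_inverse hST hTS (isSelfAdjoint_tildeNum F)
      (isSelfAdjoint_tildeDenom F) (commute_tildeNum_tildeDenom hF)).star_eq
end
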